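/- Let D and N be positive integers with gcd(D, N) = 1. Then e₁(D, N) ≤ 4·√(DN) and e₃(D, N) ≤ 4·√(DN), as real numbers. -/
import Mathlib


open scoped BigOperators

/-- The Dedekind psi function `ψ(N) = N ∏_{p ∣ N} (1 + 1/p)`, as a real number. -/
noncomputable def dedekindPsi (N : ℕ) : ℝ :=
  N * ∏ p ∈ N.primeFactors, (1 + 1 / (p : ℝ))

/-- The Kronecker symbol `(-4|p)`: `0` at `p = 2`, and the Legendre symbol
`(-4|p)` at odd primes `p` (junk value `0` at non-primes). -/
noncomputable def chiFour (p : ℕ) : ℤ :=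
  if hp : p.Prime then (if p = 2 then 0 else @legendreSym p ⟨hp⟩ (-4)) else 0

/-- The Kronecker symbol `(-3|p)`: `-1` at `p = 2`, and the Legendre symbol
`(-3|p)` at odd primes `p` (junk value `0` at non-primes). -/
noncomputable def chiThree (p : ℕ) : ℤ :=
  if hp : p.Prime then (if p = 2 then -1 else @legendreSym p ⟨hp⟩ (-3)) else 0

/-- `e₁(D, N) = ∏_{p ∣ D} (1 - (-4|p)) ⬝ ∏_{p ∣ N} (1 + (-4|p))`, the number of
CM points of discriminant `-4` on `X₀^D(N)`. -/
noncomputable def eOne (D N : ℕ) : ℤ :=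
  (∏ p ∈ D.primeFactors, (1 - chiFour p)) * ∏ p ∈ N.primeFactors, (1 + chiFour p)

/-- `e₃(D, N) = ∏_{p ∣ D} (1 - (-3|p)) ⬝ ∏_{p ∣ N} (1 + (-3|p))`, the number of
CM points of discriminant `-3` on `X₀^D(N)`. -/
noncomputable def eThree (D N : ℕ) : ℤ :=
  (∏ p ∈ D.primeFactors, (1 - chiThree p)) * ∏ p ∈ N.primeFactors, (1 + chiThree p)


lemma legendre_bounds (p : ℕ) [hp : Fact p.Prime] (a : ℤ) :
    -1 ≤ legendreSym p a ∧ legendreSym p a ≤ 1 := by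
  rcases eq_or_ne ((a : ZMod p)) 0 with h | h
  · rw [(legendreSym.eq_zero_iff p a).2 h]; norm_num
  · rcases legendreSym.eq_one_or_neg_one p h with h1 | h1 <;> rw [h1] <;> norm_num

lemma chiFour_bounds (p : ℕ) : -1 ≤ chiFour p ∧ chiFour p ≤ 1 := by
  unfold chiFour
  split_ifs with hp h
  · norm_num
  · have := @legendre_bounds p ⟨hp⟩ (-4); exact this
  · norm_num

lemma chiThree_bounds (p : ℕ) : -1 ≤ chiThree p ∧ chiThree p ≤ 1 := by
  unfold chiThree
  split_ifs with hp h
  · norm_num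
  · have := @legendre_bounds p ⟨hp⟩ (-3); exact this
  · norm_num

lemma four_pow_card_le (S : Finset ℕ) (hS : ∀ p ∈ S, p.Prime) :
    (4 : ℕ) ^ S.card ≤ 16 * ∏ p ∈ S, p := by
  have hsplit : (S ∩ {2, 3}).card + (S \ {2, 3}).card = S.card :=
    Finset.card_inter_add_card_sdiff S {2, 3}
  have h1 : (S ∩ ({2, 3} : Finset ℕ)).card ≤ 2 := by
    have := Finset.card_le_card (Finset.inter_subset_right (s₁ := S) (s₂ := ({2,3} : Finset ℕ)))
    simpa using this
  have h2 : (4 : ℕ) ^ (S \ {2, 3}).card ≤ ∏ p ∈ S \ {2, 3}, p := by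
    rw [← Finset.prod_const]
    apply Finset.prod_le_prod' -- ∀ i ∈ s, f i ≤ g i
    intro p hp
    obtain ⟨hpS, hpne⟩ := Finset.mem_sdiff.1 hp
    have hprime := hS p hpS
    have h2' : 2 ≤ p := hprime.two_le
    have : p ≠ 2 ∧ p ≠ 3 := by
      constructor <;> intro h <;> apply hpne <;> simp [h]
    rcases Nat.lt_or_ge p 4 with h4 | h4
    · interval_cases p <;> simp_all
    · omega
  have h3 : ∏ p ∈ S \ {2, 3}, p ≤ ∏ p ∈ S, p := by
    apply Finset.prod_le_prod_of_subset_of_one_le' (Finset.sdiff_subset)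
    intro i hi _
    exact (hS i hi).one_lt.le
  calc (4:ℕ) ^ S.card = 4 ^ (S ∩ {2,3}).card * 4 ^ (S \ {2,3}).card := by
        rw [← pow_add, hsplit]
    _ ≤ 16 * ∏ p ∈ S, p := by
        apply Nat.mul_le_mul
        · calc (4:ℕ) ^ (S ∩ {2,3}).card ≤ 4 ^ 2 := Nat.pow_le_pow_right (by norm_num) h1
            _ = 16 := by norm_num
        · exact le_trans h2 h3

lemma main_aux (χ : ℕ → ℤ) (hχ : ∀ p, -1 ≤ χ p ∧ χ p ≤ 1) (D N : ℕ)
    (hDpos : 0 < D) (hNpos : 0 < N) (hgcd : Nat.gcd D N = 1) :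
    (((∏ p ∈ D.primeFactors, (1 - χ p)) * ∏ p ∈ N.primeFactors, (1 + χ p) : ℤ) : ℝ)
      ≤ 4 * Real.sqrt ((D : ℝ) * N) := by
  have hco : Nat.Coprime D N := hgcd
  -- integer bound
  have hDbound : (∏ p ∈ D.primeFactors, (1 - χ p)) ≤ 2 ^ D.primeFactors.card := by
    rw [← Finset.prod_const]
    apply Finset.prod_le_prod
    · intro p _; have := (hχ p).2; omega
    · intro p _; have := (hχ p).1; omega
  have hNbound : (∏ p ∈ N.primeFactors, (1 + χ p)) ≤ 2 ^ N.primeFactors.card := by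
    rw [← Finset.prod_const]
    apply Finset.prod_le_prod
    · intro p _; have := (hχ p).1; omega
    · intro p _; have := (hχ p).2; omega
  have hDnn : 0 ≤ ∏ p ∈ D.primeFactors, (1 - χ p) :=
    Finset.prod_nonneg fun p _ => by have := (hχ p).2; omega
  have hNnn : 0 ≤ ∏ p ∈ N.primeFactors, (1 + χ p) :=
    Finset.prod_nonneg fun p _ => by have := (hχ p).1; omega
  have hint : (∏ p ∈ D.primeFactors, (1 - χ p)) * ∏ p ∈ N.primeFactors, (1 + χ p)
      ≤ 2 ^ (D.primeFactors.card + N.primeFactors.card) := by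
    rw [pow_add]
    exact mul_le_mul hDbound hNbound hNnn (by positivity)
  -- card sum = card of product's primeFactors
  have hunion : (D * N).primeFactors = D.primeFactors ∪ N.primeFactors :=
    Nat.Coprime.primeFactors_mul hco
  have hdisj : Disjoint D.primeFactors N.primeFactors :=
    Nat.Coprime.disjoint_primeFactors hco
  have hcard : D.primeFactors.card + N.primeFactors.card = (D * N).primeFactors.card := by
    rw [hunion, Finset.card_union_of_disjoint hdisj]
  -- nat bound
  have hnat : (4 : ℕ) ^ (D * N).primeFactors.card ≤ 16 * (D * N) := by
    calc (4:ℕ) ^ (D * N).primeFactors.card ≤ 16 * ∏ p ∈ (D * N).primeFactors, p :=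
          four_pow_card_le _ (fun p hp => Nat.prime_of_mem_primeFactors hp)
      _ ≤ 16 * (D * N) := by
          apply Nat.mul_le_mul_left
          exact Nat.le_of_dvd (Nat.mul_pos hDpos hNpos) (Nat.prod_primeFactors_dvd _)
  -- real side
  set k := (D * N).primeFactors.card
  have hreal : ((2:ℝ) ^ k) ≤ 4 * Real.sqrt ((D : ℝ) * N) := by
    have h4 : ((4:ℝ)) ^ k ≤ 16 * ((D:ℝ) * N) := by exact_mod_cast hnat
    have h2k : (2:ℝ) ^ k = Real.sqrt ((4:ℝ) ^ k) := by
      rw [show ((4:ℝ)) ^ k = ((2:ℝ) ^ k) ^ 2 by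
        rw [← pow_mul, mul_comm, pow_mul]; norm_num]
      rw [Real.sqrt_sq (by positivity)]
    calc (2:ℝ) ^ k = Real.sqrt ((4:ℝ) ^ k) := h2k
      _ ≤ Real.sqrt (16 * ((D:ℝ) * N)) := Real.sqrt_le_sqrt h4
      _ = 4 * Real.sqrt ((D:ℝ) * N) := by
          rw [Real.sqrt_mul (by norm_num), show (16:ℝ) = 4 ^ 2 by norm_num,
            Real.sqrt_sq (by norm_num)]
  calc (((∏ p ∈ D.primeFactors, (1 - χ p)) * ∏ p ∈ N.primeFactors, (1 + χ p) : ℤ) : ℝ)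
      ≤ ((2:ℤ) ^ (D.primeFactors.card + N.primeFactors.card) : ℤ) := by exact_mod_cast hint
    _ = (2:ℝ) ^ k := by push_cast [hcard]; ring
    _ ≤ 4 * Real.sqrt ((D : ℝ) * N) := hreal


/-- For positive coprime integers `D` and `N`, one has
`e₁(D, N) ≤ 4√(DN)` and `e₃(D, N) ≤ 4√(DN)` as real numbers. -/
theorem eOne_eThree_le (D N : ℕ) (hDpos : 0 < D) (hNpos : 0 < N)
    (hgcd : Nat.gcd D N = 1) :
    (eOne D N : ℝ) ≤ 4 * Real.sqrt ((D : ℝ) * N) ∧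
      (eThree D N : ℝ) ≤ 4 * Real.sqrt ((D : ℝ) * N) := by
  exact ⟨main_aux chiFour chiFour_bounds D N hDpos hNpos hgcd,
         main_aux chiThree chiThree_bounds D N hDpos hNpos hgcd⟩
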